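/- For any f = c₁t+c₂t²+⋯ ∈ t·k[[t]], define C_f : k⟨A⟩ → kA by C_f(1)=0 and C_f(a₁a₂⋯a_n)=c_n · a₁⋄a₂⋄⋯⋄a_n for letters a_i. Then (Ψ_f, C_f) is an inverse pair: C_f is a contraction, Ψ_f = ηε + C_f ⊙ Ψ_f, and in particular Ψ_f is a coalgebra map for the deconcatenation coproduct, i.e., ΔΨ_f = (Ψ_f⊗Ψ_f)Δ and εΨ_f = ε. -/

import Mathlib

/-!
Setting (Hoffman–Ihara, "Quasi-shuffle products revisited"):
`k` is a field containing `ℚ`, `A` a countable set of letters, `kA` the `k`-vector space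
with basis `A` equipped with an associative commutative bilinear product `⋄` (given below as
a bilinear map `d`), and `k⟨A⟩` the noncommutative polynomial algebra on `A`, realized as
the monoid algebra of the free monoid of words on `A`.
-/

noncomputable section

open scoped BigOperators TensorProduct

section QuasiShuffle

variable (k A : Type*) [Field k] [CharZero k] [Countable A]

/-- `k⟨A⟩`, the noncommutative polynomial algebra on `A`: the `k`-vector space with basis
the words in `A`, with concatenation product and unit the empty word. -/
abbrev KAlg : Type _ := MonoidAlgebra k (FreeMonoid A)

/-- `kA`, the `k`-vector space with basis `A`. -/
abbrev KA : Type _ := A →₀ k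

variable {k A}

/-- The basis element of `k⟨A⟩` corresponding to a word. -/
def word (w : List A) : KAlg k A := MonoidAlgebra.of k (FreeMonoid A) (FreeMonoid.ofList w)

/-- Linear extension to `k⟨A⟩` of a function defined on words. -/
def liftW {N : Type*} [AddCommMonoid N] [Module k N] (g : List A → N) :
    KAlg k A →ₗ[k] N :=
  (Finsupp.lsum k fun w => LinearMap.toSpanSingleton k N (g (FreeMonoid.toList w))) ∘ₗ
    (MonoidAlgebra.coeffLinearEquiv k).toLinearMap

/-- The inclusion of `kA` into `k⟨A⟩` (letters as one-letter words). -/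
def incl : KA k A →ₗ[k] KAlg k A :=
  Finsupp.lsum k fun a => LinearMap.toSpanSingleton k (KAlg k A) (word [a])

/-- The `⋄`-product (via the bilinear map `d` on `kA`) of the letters of a word, as an
element of `kA`; `0` for the empty word. -/
def dChunk (d : KA k A →ₗ[k] KA k A →ₗ[k] KA k A) : List A → KA k A
  | [] => 0
  | a :: t => t.foldl (fun x b => d x (Finsupp.single b 1)) (Finsupp.single a 1)

/-- `I[w]`: for a composition `I` of the length of the word `w`, the concatenation product
of the `⋄`-products of the blocks of `w` determined by `I`. -/
def IW (d : KA k A →ₗ[k] KA k A →ₗ[k] KA k A) (w : List A) (I : Composition w.length) :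
    KAlg k A :=
  ((w.splitWrtComposition I).map fun ch => incl (dChunk d ch)).prod

/-- The linear map `Ψ_f` on `k⟨A⟩` associated to a power series `f = Σ_{n≥1} c_n tⁿ`,
where `c : ℕ → k` records the coefficients:
`Ψ_f(w) = Σ_{I composition of ℓ(w)} c_{i₁} ⋯ c_{i_m} I[w]`. -/
def Psi (d : KA k A →ₗ[k] KA k A →ₗ[k] KA k A) (c : ℕ → k) : KAlg k A →ₗ[k] KAlg k A :=
  liftW fun w => ∑ I : Composition w.length, (I.blocks.map c).prod • IW d w I

/-- The deconcatenation coproduct `Δ(w) = Σ_{uv=w} u ⊗ v`. -/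
def Delta : KAlg k A →ₗ[k] TensorProduct k (KAlg k A) (KAlg k A) :=
  liftW fun w => ∑ i ∈ Finset.range (w.length + 1), word (w.take i) ⊗ₜ[k] word (w.drop i)

/-- The reduced deconcatenation coproduct `Δ̃(w) = Σ_{uv=w, u≠1≠v} u ⊗ v`. -/
def rDelta : KAlg k A →ₗ[k] TensorProduct k (KAlg k A) (KAlg k A) :=
  liftW fun w => ∑ i ∈ Finset.Ico 1 w.length, word (w.take i) ⊗ₜ[k] word (w.drop i)

/-- The counit `ε` (coefficient of the empty word). -/
def epsL : KAlg k A →ₗ[k] k :=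
  liftW fun w => if w.isEmpty then (1 : k) else 0

/-- `ηε`, the unit of the convolution product `⊙`. -/
def etaEps : KAlg k A →ₗ[k] KAlg k A :=
  liftW fun w => if w.isEmpty then word ([] : List A) else 0

/-- The convolution product `⊙` on `Hom_k(k⟨A⟩, k⟨A⟩)`:
`(L₁ ⊙ L₂)(w) = Σ_{uv=w} L₁(u) L₂(v)` (concatenation product on the right). -/
def conv (L₁ L₂ : KAlg k A →ₗ[k] KAlg k A) : KAlg k A →ₗ[k] KAlg k A :=
  liftW fun w => ∑ i ∈ Finset.range (w.length + 1), L₁ (word (w.take i)) * L₂ (word (w.drop i))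

/-- The contraction `C_f : k⟨A⟩ → kA ⊆ k⟨A⟩` associated to `f = Σ_{n≥1} cₙtⁿ`:
`C_f(1) = 0` and `C_f(a₁⋯aₙ) = cₙ · a₁⋄⋯⋄aₙ`. -/
def Cf (d : KA k A →ₗ[k] KA k A →ₗ[k] KA k A) (c : ℕ → k) : KAlg k A →ₗ[k] KAlg k A :=
  liftW fun w => c w.length • incl (dChunk d w)


set_option linter.unusedSectionVars false
set_option maxHeartbeats 1000000

section Aux
variable {k A : Type*} [Field k] [CharZero k] [Countable A]

lemma sum_comp {M : Type*} [AddCommMonoid M] (n : ℕ) (hn : 0 < n) (g : List ℕ → M) :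
    ∑ I : Composition n, g I.blocks
      = ∑ i ∈ Finset.Icc 1 n, ∑ J : Composition (n - i), g (i :: J.blocks) := by
  have hbne : ∀ I : Composition n, I.blocks ≠ [] := by
    intro I h
    have := I.blocks_sum
    rw [h] at this
    simp at this
    omega
  rw [Finset.sum_sigma']
  refine Finset.sum_bij'
    (i := fun (I : Composition n) (_ : I ∈ Finset.univ) =>
      (⟨I.blocks.head!, ⟨I.blocks.tail,
        fun {x} hx => I.blocks_pos (List.mem_of_mem_tail hx),
        by
          have h1 := I.blocks_sum
          have h2 := List.cons_head!_tail (hbne I)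
          have h3 : I.blocks.head! + I.blocks.tail.sum = n := by
            have h2' := congrArg List.sum h2
            simpa [h1] using h2'
          have h4 : 0 < I.blocks.head! := I.blocks_pos (by
            rw [← h2]; exact List.mem_cons_self)
          omega⟩⟩ : Σ i : ℕ, Composition (n - i)))
    (j := fun p hp =>
      (⟨p.1 :: p.2.blocks,
        by
          intro x hx
          rcases List.mem_cons.1 hx with rfl | hx
          · have := Finset.mem_sigma.1 hp
            have := Finset.mem_Icc.1 this.1
            omega
          · exact p.2.blocks_pos hx,
        by
          have := Finset.mem_sigma.1 hp
          have h1 := Finset.mem_Icc.1 this.1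
          have h2 := p.2.blocks_sum
          simp [h2]
          omega⟩ : Composition n))
    ?_ ?_ ?_ ?_ ?_
  · intro I _
    rw [Finset.mem_sigma]
    constructor
    · rw [Finset.mem_Icc]
      have h4 : 0 < I.blocks.head! := I.blocks_pos (by
        rw [← List.cons_head!_tail (hbne I)]; exact List.mem_cons_self)
      have h5 : I.blocks.head! ≤ I.blocks.sum := by
        conv_rhs => rw [← List.cons_head!_tail (hbne I)]
        simp
      rw [I.blocks_sum] at h5
      exact ⟨h4, h5⟩
    · exact Finset.mem_univ _
  · intro p hp
    exact Finset.mem_univ _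
  · intro I _
    apply Composition.ext
    simp [List.cons_head!_tail (hbne I)]
  · intro p hp
    rcases p with ⟨i, J⟩
    apply Sigma.ext
    · simp
    · simp only [List.head!_cons, List.tail_cons]
      rw [heq_iff_eq]
  · intro I _
    congr 1
    exact (List.cons_head!_tail (hbne I)).symm

lemma sum_comp' {M : Type*} [AddCommMonoid M] (n : ℕ) (hn : 0 < n) (g : List ℕ → M) :
    ∑ I : Composition n, g I.blocks
      = ∑ i ∈ Finset.range n, ∑ J : Composition (n - (i + 1)), g ((i + 1) :: J.blocks) := by
  rw [sum_comp n hn g, ← Finset.Ico_add_one_right_eq_Icc, Finset.sum_Ico_eq_sum_range]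
  refine Finset.sum_congr rfl fun i _ => ?_
  rw [Nat.add_comm 1 i]

lemma tri {M : Type*} [AddCommMonoid M] (n : ℕ) (f : ℕ → ℕ → M) :
    ∑ i ∈ Finset.range n, ∑ m ∈ Finset.range (n - i), f i m
      = ∑ j ∈ Finset.range n, ∑ i ∈ Finset.range (j + 1), f i (j - i) := by
  rw [Finset.sum_sigma', Finset.sum_sigma']
  refine Finset.sum_bij' (i := fun p _ => (⟨p.1 + p.2, p.1⟩ : Σ _ : ℕ, ℕ))
    (j := fun p _ => (⟨p.2, p.1 - p.2⟩ : Σ _ : ℕ, ℕ)) ?_ ?_ ?_ ?_ ?_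
  · rintro ⟨a, b⟩ hp
    dsimp only
    have := Finset.mem_sigma.1 hp
    simp only [Finset.mem_range] at this
    simp only [Finset.mem_sigma, Finset.mem_range]
    omega
  · rintro ⟨a, b⟩ hp
    dsimp only
    have := Finset.mem_sigma.1 hp
    simp only [Finset.mem_range] at this
    simp only [Finset.mem_sigma, Finset.mem_range]
    omega
  · rintro ⟨a, b⟩ hp
    dsimp only
    have := Finset.mem_sigma.1 hp
    simp only [Finset.mem_range] at this
    ext <;> simp <;> omega
  · rintro ⟨a, b⟩ hp
    dsimp only
    have := Finset.mem_sigma.1 hp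
    simp only [Finset.mem_range] at this
    ext <;> simp <;> omega
  · rintro ⟨a, b⟩ hp
    dsimp only
    have := Finset.mem_sigma.1 hp
    simp only [Finset.mem_range] at this
    congr 1
    omega

lemma liftW_word {N : Type*} [AddCommMonoid N] [Module k N] (g : List A → N) (w : List A) :
    liftW (k := k) g (word w) = g w := by
  rw [liftW, word, MonoidAlgebra.of_apply, LinearMap.comp_apply]
  change (Finsupp.lsum k _) (Finsupp.single (FreeMonoid.ofList w) (1 : k)) = _
  erw [Finsupp.lsum_single]
  simp

lemma word_nil : (word ([] : List A) : KAlg k A) = 1 := rfl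

lemma word_append (u v : List A) : (word (u ++ v) : KAlg k A) = word u * word v := by
  simp [word, ← map_mul]

lemma wext {N : Type*} [AddCommMonoid N] [Module k N] (f g : KAlg k A →ₗ[k] N)
    (h : ∀ w : List A, f (word w) = g (word w)) : f = g := by
  apply MonoidAlgebra.lhom_ext'
  intro x
  apply LinearMap.ext_ring
  simpa [word, MonoidAlgebra.of_apply] using h (FreeMonoid.toList x)

lemma kaext {N : Type*} [AddCommMonoid N] [Module k N] (f g : KA k A →ₗ[k] N)
    (h : ∀ a : A, f (Finsupp.single a 1) = g (Finsupp.single a 1)) : f = g := by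
  apply Finsupp.lhom_ext'
  intro a
  apply LinearMap.ext_ring
  exact h a

lemma incl_single (a : A) : incl (Finsupp.single a (1 : k)) = word [a] := by
  rw [incl]
  erw [Finsupp.lsum_single]
  simp

/-- Untyped version of `IW`. -/
def IWb (d : KA k A →ₗ[k] KA k A →ₗ[k] KA k A) (w : List A) (bs : List ℕ) : KAlg k A :=
  ((List.splitWrtCompositionAux w bs).map fun ch => incl (dChunk d ch)).prod

lemma IW_eq_IWb (d : KA k A →ₗ[k] KA k A →ₗ[k] KA k A) (w : List A)
    (I : Composition w.length) : IW d w I = IWb d w I.blocks := rfl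

lemma IWb_nil (d : KA k A →ₗ[k] KA k A →ₗ[k] KA k A) (w : List A) :
    IWb d w [] = 1 := rfl

lemma IWb_cons (d : KA k A →ₗ[k] KA k A →ₗ[k] KA k A) (w : List A) (i : ℕ) (bs : List ℕ) :
    IWb d w (i :: bs) = incl (dChunk d (w.take i)) * IWb d (w.drop i) bs := by
  simp [IWb, List.splitWrtCompositionAux_cons]

lemma Psi_apply (d : KA k A →ₗ[k] KA k A →ₗ[k] KA k A) (c : ℕ → k) (w : List A) :
    Psi d c (word w)
      = ∑ I : Composition w.length, (I.blocks.map c).prod • IWb d w I.blocks :=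
  liftW_word _ w

lemma Cf_apply (d : KA k A →ₗ[k] KA k A →ₗ[k] KA k A) (c : ℕ → k) (w : List A) :
    Cf d c (word w) = c w.length • incl (dChunk d w) :=
  liftW_word _ w

lemma Delta_apply (w : List A) :
    Delta (word w : KAlg k A)
      = ∑ i ∈ Finset.range (w.length + 1), word (w.take i) ⊗ₜ[k] word (w.drop i) :=
  liftW_word _ w

lemma rDelta_apply (w : List A) :
    rDelta (word w : KAlg k A)
      = ∑ i ∈ Finset.Ico 1 w.length, word (w.take i) ⊗ₜ[k] word (w.drop i) :=
  liftW_word _ w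

lemma epsL_apply (w : List A) :
    epsL (word w : KAlg k A) = if w.isEmpty then (1 : k) else 0 :=
  liftW_word _ w

lemma etaEps_apply (w : List A) :
    etaEps (word w : KAlg k A) = if w.isEmpty then word ([] : List A) else 0 :=
  liftW_word _ w

lemma conv_apply (L₁ L₂ : KAlg k A →ₗ[k] KAlg k A) (w : List A) :
    conv L₁ L₂ (word w)
      = ∑ i ∈ Finset.range (w.length + 1), L₁ (word (w.take i)) * L₂ (word (w.drop i)) :=
  liftW_word _ w

end Aux


section Aux2
variable {k A : Type*} [Field k] [CharZero k] [Countable A]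

lemma comp_zero_blocks (I : Composition 0) : I.blocks = [] := by
  cases hb : I.blocks with
  | nil => rfl
  | cons a t =>
    have h1 : 0 < a := I.blocks_pos (hb ▸ List.mem_cons_self (a := a) (l := t))
    have h2 := I.blocks_sum
    rw [hb] at h2
    simp [List.sum_cons] at h2
    omega

lemma Psi_one (d : KA k A →ₗ[k] KA k A →ₗ[k] KA k A) (c : ℕ → k) :
    Psi d c (word ([] : List A)) = 1 := by
  rw [Psi_apply]
  rw [Finset.sum_congr rfl fun (I : Composition ([] : List A).length) _ => by
    rw [comp_zero_blocks I]]
  simp only [List.map_nil, List.prod_nil, IWb_nil, one_smul]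
  rw [Finset.sum_const, Finset.card_univ]
  have : Fintype.card (Composition ([] : List A).length) = 1 := by
    simp only [List.length_nil]
    rw [composition_card]
    norm_num
  rw [this, one_smul]

/-- `ε` as an algebra homomorphism. -/
def epsA : KAlg k A →ₐ[k] k :=
  MonoidAlgebra.lift k k (FreeMonoid A) (FreeMonoid.lift fun _ => (0 : k))

lemma epsL_eq_epsA : (epsL : KAlg k A →ₗ[k] k) = epsA.toLinearMap := by
  apply wext
  intro w
  rw [epsL_apply]
  show _ = epsA (word w)
  rw [word, epsA, MonoidAlgebra.lift_of, FreeMonoid.lift_ofList]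
  cases w with
  | nil => simp
  | cons a t => simp

lemma epsL_mul (x y : KAlg k A) : epsL (x * y) = epsL x * epsL y := by
  rw [epsL_eq_epsA]; exact map_mul epsA x y

lemma epsL_one : epsL (1 : KAlg k A) = 1 := by
  rw [epsL_eq_epsA]; exact map_one epsA

lemma epsL_incl (x : KA k A) : epsL (incl x : KAlg k A) = 0 := by
  have h : (epsL ∘ₗ incl : KA k A →ₗ[k] k) = 0 := by
    apply kaext
    intro a
    simp only [LinearMap.comp_apply, LinearMap.zero_apply, incl_single, epsL_apply]
    simp [epsL_apply]
  simpa using LinearMap.congr_fun h x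

lemma rDelta_incl (x : KA k A) : rDelta (incl x : KAlg k A) = 0 := by
  have h : (rDelta ∘ₗ incl : KA k A →ₗ[k] _) = 0 := by
    apply kaext
    intro a
    simp only [LinearMap.comp_apply, LinearMap.zero_apply, incl_single, rDelta_apply]
    simp
  simpa using LinearMap.congr_fun h x

lemma comp_sum_cast {M : Type*} [AddCommMonoid M] {m m' : ℕ} (h : m = m')
    (g : List ℕ → M) :
    ∑ I : Composition m, g I.blocks = ∑ I : Composition m', g I.blocks := by
  subst h; rfl

lemma blocks_ne_nil {n : ℕ} (hn : 0 < n) (I : Composition n) : I.blocks ≠ [] := by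
  intro h
  have := I.blocks_sum
  rw [h] at this
  simp at this
  omega

lemma epsL_IWb (d : KA k A →ₗ[k] KA k A →ₗ[k] KA k A) (w : List A) (b : ℕ) (bs : List ℕ) :
    epsL (IWb d w (b :: bs)) = 0 := by
  rw [IWb_cons, epsL_mul, epsL_incl, zero_mul]

lemma dChunk_nil (d : KA k A →ₗ[k] KA k A →ₗ[k] KA k A) : dChunk d ([] : List A) = 0 := rfl

lemma Cf_nil (d : KA k A →ₗ[k] KA k A →ₗ[k] KA k A) (c : ℕ → k) :
    Cf d c (word ([] : List A)) = 0 := by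
  rw [Cf_apply]
  simp [dChunk_nil]

/-- The recursion `Ψ = ηε + C ⊙ Ψ` evaluated on words. -/
lemma Psi_rec (d : KA k A →ₗ[k] KA k A →ₗ[k] KA k A) (c : ℕ → k) (w : List A)
    (hw : w ≠ []) :
    Psi d c (word w) = ∑ i ∈ Finset.range w.length,
      c (i + 1) • (incl (dChunk d (w.take (i + 1))) * Psi d c (word (w.drop (i + 1)))) := by
  have hn : 0 < w.length := List.length_pos_iff.2 hw
  rw [Psi_apply, sum_comp' w.length hn (fun bs => (List.map c bs).prod • IWb d w bs)]
  refine Finset.sum_congr rfl fun i hi => ?_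
  have hi' : i + 1 ≤ w.length := Finset.mem_range.1 hi
  rw [Psi_apply]
  rw [comp_sum_cast (show (List.drop (i + 1) w).length = w.length - (i + 1) by simp)
    (fun bs => (List.map c bs).prod • IWb d (List.drop (i + 1) w) bs)]
  rw [Finset.mul_sum, Finset.smul_sum]
  refine Finset.sum_congr rfl fun J _ => ?_
  rw [List.map_cons, List.prod_cons, IWb_cons, mul_smul_comm, smul_smul]

end Aux2

section Aux3
variable {k A : Type*} [Field k] [CharZero k] [Countable A]

lemma Delta_word_cons (a : A) (y : KAlg k A) :
    Delta (word [a] * y) = ((word [a] : KAlg k A) ⊗ₜ[k] (1 : KAlg k A)) * Delta y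
      + (1 : KAlg k A) ⊗ₜ[k] (word [a] * y) := by
  have h : (Delta ∘ₗ LinearMap.mulLeft k (word [a]) : KAlg k A →ₗ[k] _) =
      LinearMap.mulLeft k ((word [a] : KAlg k A) ⊗ₜ[k] (1 : KAlg k A)) ∘ₗ Delta
        + (TensorProduct.mk k (KAlg k A) (KAlg k A) 1) ∘ₗ LinearMap.mulLeft k (word [a]) := by
    apply wext
    intro v
    simp only [LinearMap.comp_apply, LinearMap.add_apply, LinearMap.mulLeft_apply,
      TensorProduct.mk_apply]
    rw [show (word [a] : KAlg k A) * word v = word (a :: v) by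
      rw [← word_append]; rfl]
    rw [Delta_apply, Delta_apply]
    rw [show (a :: v).length + 1 = (v.length + 1) + 1 by simp]
    rw [Finset.sum_range_succ']
    simp only [List.take_zero, List.drop_zero, word_nil]
    congr 1
    · rw [Finset.mul_sum]
      refine Finset.sum_congr rfl fun i _ => ?_
      rw [List.take_succ_cons, List.drop_succ_cons,
        Algebra.TensorProduct.tmul_mul_tmul, one_mul,
        show (word (a :: v.take i) : KAlg k A) = word [a] * word (v.take i) by
          rw [← word_append]; rfl]
  exact LinearMap.congr_fun h y

lemma Delta_incl_mul (x : KA k A) (y : KAlg k A) :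
    Delta (incl x * y) = ((incl x : KAlg k A) ⊗ₜ[k] (1 : KAlg k A)) * Delta y
      + (1 : KAlg k A) ⊗ₜ[k] (incl x * y) := by
  induction x using Finsupp.induction_linear with
  | zero => simp
  | add f g hf hg =>
    rw [map_add, add_mul, map_add, hf, hg, TensorProduct.add_tmul, add_mul,
      TensorProduct.tmul_add]
    abel
  | single a b =>
    have hb : (Finsupp.single a b : KA k A) = b • Finsupp.single a 1 := by
      rw [Finsupp.smul_single, smul_eq_mul, mul_one]
    rw [hb, map_smul, incl_single, smul_mul_assoc, map_smul, Delta_word_cons, smul_add]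
    congr 1
    · rw [← TensorProduct.smul_tmul', smul_mul_assoc]
    · rw [TensorProduct.tmul_smul]

lemma part1b (d : KA k A →ₗ[k] KA k A →ₗ[k] KA k A) (c : ℕ → k) (w : List A) :
    rDelta (Cf d c (word w)) = 0 := by
  rw [Cf_apply, map_smul, rDelta_incl, smul_zero]

lemma part3 (d : KA k A →ₗ[k] KA k A →ₗ[k] KA k A) (c : ℕ → k) (hc0 : c 0 = 0) :
    Psi d c = etaEps + conv (Cf d c) (Psi d c) := by
  apply wext
  intro w
  rw [LinearMap.add_apply, conv_apply, etaEps_apply]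
  rcases eq_or_ne w [] with rfl | hw
  · simp only [List.isEmpty_nil, if_true]
    rw [Psi_one]
    rw [show ([] : List A).length + 1 = 1 from rfl, Finset.sum_range_one]
    simp only [List.take_nil, List.drop_nil]
    rw [Cf_nil, zero_mul, add_zero, word_nil]
  · have hn : 0 < w.length := List.length_pos_iff.2 hw
    have he : w.isEmpty = false := by simp [hw]
    rw [he, if_neg (by simp), zero_add]
    rw [Psi_rec d c w hw]
    rw [Finset.sum_range_succ']
    simp only [List.take_zero, List.drop_zero]
    rw [Cf_nil, zero_mul, add_zero]
    refine Finset.sum_congr rfl fun i hi => ?_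
    have hi' : i + 1 ≤ w.length := Finset.mem_range.1 hi
    rw [Cf_apply]
    rw [show (List.take (i + 1) w).length = i + 1 by
      rw [List.length_take]; omega]
    rw [smul_mul_assoc]

lemma part5 (d : KA k A →ₗ[k] KA k A →ₗ[k] KA k A) (c : ℕ → k) :
    epsL ∘ₗ Psi d c = (epsL : KAlg k A →ₗ[k] k) := by
  apply wext
  intro w
  rw [LinearMap.comp_apply, epsL_apply]
  rcases eq_or_ne w [] with rfl | hw
  · simp only [List.isEmpty_nil, if_true]
    rw [Psi_one, epsL_one]
  · have he : w.isEmpty = false := by simp [hw]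
    rw [he, if_neg (by simp)]
    rw [Psi_apply, map_sum]
    refine Finset.sum_eq_zero fun I _ => ?_
    rw [map_smul]
    have hb := blocks_ne_nil (List.length_pos_iff.2 hw) I
    obtain ⟨b, bs, hbb⟩ : ∃ b bs, I.blocks = b :: bs := by
      cases h : I.blocks with
      | nil => exact absurd h hb
      | cons b bs => exact ⟨b, bs, rfl⟩
    rw [hbb, epsL_IWb, smul_zero]

end Aux3

section Aux4
variable {k A : Type*} [Field k] [CharZero k] [Countable A]

lemma part4 (d : KA k A →ₗ[k] KA k A →ₗ[k] KA k A) (c : ℕ → k) :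
    Delta ∘ₗ Psi d c = TensorProduct.map (Psi d c) (Psi d c) ∘ₗ (Delta : KAlg k A →ₗ[k] _) := by
  suffices h : ∀ n (w : List A), w.length = n →
      Delta (Psi d c (word w)) = TensorProduct.map (Psi d c) (Psi d c) (Delta (word w)) by
    apply wext
    intro w
    simpa using h w.length w rfl
  intro n
  induction n using Nat.strong_induction_on with
  | _ n IH =>
  intro w hwn
  rcases eq_or_ne w [] with rfl | hw
  · have h1 : Psi d c (word ([] : List A)) = word ([] : List A) := by rw [Psi_one, word_nil]
    rw [h1, Delta_apply]
    simp only [List.length_nil, zero_add, Finset.sum_range_one, List.take_nil, List.drop_nil]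
    rw [TensorProduct.map_tmul, h1]
  · have hn : 0 < w.length := List.length_pos_iff.2 hw
    rw [Psi_rec d c w hw, map_sum]
    simp only [map_smul]
    have hL2 : ∀ i ∈ Finset.range w.length,
        Delta (incl (dChunk d (w.take (i+1))) * Psi d c (word (w.drop (i+1))))
          = ((incl (dChunk d (w.take (i+1))) : KAlg k A) ⊗ₜ[k] (1 : KAlg k A)) *
              (TensorProduct.map (Psi d c) (Psi d c) (Delta (word (w.drop (i+1)))))
            + (1 : KAlg k A) ⊗ₜ[k]
                (incl (dChunk d (w.take (i+1))) * Psi d c (word (w.drop (i+1)))) := by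
      intro i hi
      rw [Delta_incl_mul, IH (w.drop (i+1)).length (by rw [List.length_drop]; omega) _ rfl]
    rw [Finset.sum_congr rfl fun i hi => by rw [hL2 i hi]]
    simp only [smul_add]
    rw [Finset.sum_add_distrib]
    have hsecond : ∑ i ∈ Finset.range w.length,
        c (i+1) • ((1 : KAlg k A) ⊗ₜ[k]
            (incl (dChunk d (w.take (i+1))) * Psi d c (word (w.drop (i+1)))))
          = (1 : KAlg k A) ⊗ₜ[k] Psi d c (word w) := by
      rw [Psi_rec d c w hw, TensorProduct.tmul_sum]
      refine Finset.sum_congr rfl fun i _ => ?_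
      rw [TensorProduct.tmul_smul]
    rw [hsecond]
    conv_rhs => rw [Delta_apply, map_sum, Finset.sum_range_succ']
    simp only [TensorProduct.map_tmul, List.take_zero, List.drop_zero, Psi_one]
    congr 1
    have hLHS : ∀ i ∈ Finset.range w.length,
        c (i+1) • (((incl (dChunk d (w.take (i+1))) : KAlg k A) ⊗ₜ[k] (1 : KAlg k A)) *
            TensorProduct.map (Psi d c) (Psi d c) (Delta (word (w.drop (i+1)))))
          = ∑ m ∈ Finset.range (w.length - i),
              c (i+1) • ((incl (dChunk d (w.take (i+1))) *
                  Psi d c (word ((w.drop (i+1)).take m)))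
                ⊗ₜ[k] Psi d c (word ((w.drop (i+1)).drop m))) := by
      intro i hi
      have hi' := Finset.mem_range.1 hi
      rw [Delta_apply, map_sum, Finset.mul_sum, Finset.smul_sum]
      rw [show (w.drop (i+1)).length + 1 = w.length - i by rw [List.length_drop]; omega]
      refine Finset.sum_congr rfl fun m _ => ?_
      rw [TensorProduct.map_tmul, Algebra.TensorProduct.tmul_mul_tmul, one_mul]
    rw [Finset.sum_congr rfl hLHS]
    rw [tri w.length (fun i m => c (i+1) • ((incl (dChunk d (w.take (i+1))) *
          Psi d c (word ((w.drop (i+1)).take m)))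
        ⊗ₜ[k] Psi d c (word ((w.drop (i+1)).drop m))))]
    refine Finset.sum_congr rfl fun j hj => ?_
    have hj' := Finset.mem_range.1 hj
    have htk : w.take (j+1) ≠ [] := by
      intro h
      have h2 := congrArg List.length h
      rw [List.length_take] at h2
      simp only [List.length_nil] at h2
      omega
    rw [Psi_rec d c (w.take (j+1)) htk]
    rw [show (w.take (j+1)).length = j + 1 by rw [List.length_take]; omega]
    rw [TensorProduct.sum_tmul]
    refine Finset.sum_congr rfl fun i hi => ?_
    have hi' := Finset.mem_range.1 hi
    rw [← TensorProduct.smul_tmul']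
    rw [List.take_take, show min (i+1) (j+1) = i + 1 by omega]
    rw [List.drop_take, show j + 1 - (i+1) = j - i by omega]
    rw [List.drop_drop, show (i+1) + (j-i) = j + 1 by omega]

end Aux4
/-- Theorem 4.2 of Hoffman–Ihara: `(Ψ_f, C_f)` is an inverse pair:
`C_f` is a contraction, `Ψ_f = ηε + C_f ⊙ Ψ_f`, and in particular `Ψ_f` is a coalgebra
map for the deconcatenation coproduct: `ΔΨ_f = (Ψ_f ⊗ Ψ_f)Δ` and `εΨ_f = ε`. -/
theorem Psi_Cf_inverse_pair
    {k A : Type*} [Field k] [CharZero k] [Countable A]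
    (d : KA k A →ₗ[k] KA k A →ₗ[k] KA k A)
    (hd_comm : ∀ x y, d x y = d y x)
    (hd_assoc : ∀ x y z, d (d x y) z = d x (d y z))
    (c : ℕ → k) (hc0 : c 0 = 0) :
    (Cf d c (word []) = 0 ∧ (∀ w : List A, rDelta (Cf d c (word w)) = 0)) ∧
    Psi d c = etaEps + conv (Cf d c) (Psi d c) ∧
    Delta ∘ₗ Psi d c = TensorProduct.map (Psi d c) (Psi d c) ∘ₗ Delta ∧
    epsL ∘ₗ Psi d c = epsL :=
  ⟨⟨Cf_nil d c, part1b d c⟩, part3 d c hc0, part4 d c, part5 d c⟩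

end QuasiShuffle
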